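/- Let G = G[F,V_k,H_v] be the graph with k pockets, where |V_k| = k. Then for every complex number x that is not an eigenvalue of A(H_1), the A-characteristic polynomial of G satisfies f_{A(G)}(x) = (f_{A(H_1)}(x))^k · det(x I_n − M), where M = A(F) + Γ_{A(H_1)}(x) · P and P is the n×n block-diagonal matrix diag(I_k, 0) taken with respect to an ordering of the vertices of F that lists v_1,…,v_k first. -/

import Mathlib

open Matrix BigOperators
open scoped Classical

/-- The adjacency matrix of a simple graph, with entries in `R`. -/
noncomputable def adjMat (R : Type*) [Zero R] [One R] {V : Type*} [Fintype V]
    (G : SimpleGraph V) : Matrix V V R :=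
  Matrix.of fun x y => if G.Adj x y then (1 : R) else 0

/-- The degree of a vertex. -/
noncomputable def gdeg {V : Type*} [Fintype V] (G : SimpleGraph V) (x : V) : ℕ :=
  (Finset.univ.filter fun y => G.Adj x y).card

/-- `G` is `r`-regular. -/
def IsReg {V : Type*} [Fintype V] (G : SimpleGraph V) (r : ℕ) : Prop :=
  ∀ x, gdeg G x = r

/-- The signless Laplacian matrix `Q(G) = D(G) + A(G)`. -/
noncomputable def qMat (R : Type*) [AddMonoidWithOne R] {V : Type*} [Fintype V]
    (G : SimpleGraph V) : Matrix V V R :=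
  Matrix.diagonal (fun x => (gdeg G x : R)) + adjMat R G

/-- The adjacency spectrum, as the multiset of real roots (with multiplicity) of the
characteristic polynomial of the (real symmetric) adjacency matrix. -/
noncomputable def aSpec {V : Type*} [Fintype V] (G : SimpleGraph V) : Multiset ℝ :=
  (adjMat ℝ G).charpoly.roots

/-- The signless Laplacian spectrum. -/
noncomputable def qSpec {V : Type*} [Fintype V] (G : SimpleGraph V) : Multiset ℝ :=
  (qMat ℝ G).charpoly.roots

/-- The `M`-coronal `Γ_M(x) = 1ᵀ (xI − M)⁻¹ 1`, the sum of the entries of `(xI − M)⁻¹`. -/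
noncomputable def coronal {n R : Type*} [Fintype n] [DecidableEq n] [Field R]
    (M : Matrix n n R) (x : R) : R :=
  ∑ i, ∑ j, ((x • (1 : Matrix n n R) - M)⁻¹) i j

/-- Embeds a `P × P` matrix as a `V × V` matrix supported on the image of `g`, zero elsewhere.
If the vertices of `V` are ordered listing the image of `g` first, this is `diag(M, 0)`. -/
noncomputable def embedMatrix {P V R : Type*} [Fintype P] [AddCommMonoid R]
    (g : P → V) (M : Matrix P P R) : Matrix V V R :=
  Matrix.of fun x y => ∑ px : P, ∑ py : P, if x = g px ∧ y = g py then M px py else 0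

/-- The graph `H − v` obtained by deleting the vertex `v`. -/
def delVert {W : Type*} (H : SimpleGraph W) (v : W) : SimpleGraph {w : W // w ≠ v} :=
  H.comap Subtype.val

/-- The graph `H − {u,v}` obtained by deleting the two vertices `u, v`. -/
def delVert2 {W : Type*} (H : SimpleGraph W) (u v : W) :
    SimpleGraph {w : W // w ≠ u ∧ w ≠ v} :=
  H.comap Subtype.val

/-- The join `G₁ ∨ G₂` of two vertex-disjoint graphs: their disjoint union together with all
edges between the two parts. -/
def sgJoin {α β : Type*} (G₁ : SimpleGraph α) (G₂ : SimpleGraph β) : SimpleGraph (α ⊕ β) where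
  Adj x y :=
    match x, y with
    | Sum.inl a, Sum.inl b => G₁.Adj a b
    | Sum.inl _, Sum.inr _ => True
    | Sum.inr _, Sum.inl _ => True
    | Sum.inr a, Sum.inr b => G₂.Adj a b
  symm := ⟨by
    rintro (a | a) (b | b) h
    · exact G₁.symm.symm _ _ h
    · trivial
    · trivial
    · exact G₂.symm.symm _ _ h⟩
  loopless := ⟨by
    rintro (a | a) h
    · exact G₁.loopless.irrefl a h
    · exact G₂.loopless.irrefl a h⟩

/-- The graph `G[F, V_k, H_v]` with `k` pockets: take one copy of `F` and `k` disjoint copies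
of `H` (with specified vertex `v`), identifying the vertex `v` of the `i`-th copy with the
vertex `f i` of `F`.  The `i`-th copy of `H − v` is carried by `{i} × {w // w ≠ v}`. -/
def pocketGraph {V W : Type*} (F : SimpleGraph V) (H : SimpleGraph W) (v : W)
    {k : ℕ} (f : Fin k ↪ V) : SimpleGraph (V ⊕ (Fin k × {w : W // w ≠ v})) where
  Adj x y :=
    match x, y with
    | Sum.inl a, Sum.inl b => F.Adj a b
    | Sum.inl a, Sum.inr (i, w) => a = f i ∧ H.Adj v w.1
    | Sum.inr (i, w), Sum.inl a => a = f i ∧ H.Adj v w.1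
    | Sum.inr (i, w), Sum.inr (j, w') => i = j ∧ H.Adj w.1 w'.1
  symm := ⟨by
    rintro (a | ⟨i, w⟩) (b | ⟨j, w'⟩) h
    · exact F.symm.symm _ _ h
    · exact h
    · exact h
    · exact ⟨h.1.symm, H.symm.symm _ _ h.2⟩⟩
  loopless := ⟨by
    rintro (a | ⟨i, w⟩) h
    · exact F.loopless.irrefl a h
    · exact H.loopless.irrefl _ h.2⟩

/-- The graph `G[F, E_k, H_{uv}]` with `k` edge-pockets: take one copy of `F` and `k` disjoint
copies of `H` (with specified edge `uv`), pasting the edge `uv` of the `i`-th copy onto the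
edge `e_i = (a i)(b i)` of `F` (identifying `u` with `a i` and `v` with `b i`).  The `i`-th
copy of `H − {u,v}` is carried by `{i} × {w // w ≠ u ∧ w ≠ v}`. -/
def edgePocketGraph {V W : Type*} (F : SimpleGraph V) (H : SimpleGraph W) (u v : W)
    {k : ℕ} (a b : Fin k → V) :
    SimpleGraph (V ⊕ (Fin k × {w : W // w ≠ u ∧ w ≠ v})) where
  Adj x y :=
    match x, y with
    | Sum.inl s, Sum.inl t => F.Adj s t
    | Sum.inl s, Sum.inr (i, w) => (s = a i ∧ H.Adj u w.1) ∨ (s = b i ∧ H.Adj v w.1)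
    | Sum.inr (i, w), Sum.inl s => (s = a i ∧ H.Adj u w.1) ∨ (s = b i ∧ H.Adj v w.1)
    | Sum.inr (i, w), Sum.inr (j, w') => i = j ∧ H.Adj w.1 w'.1
  symm := ⟨by
    rintro (s | ⟨i, w⟩) (t | ⟨j, w'⟩) h
    · exact F.symm.symm _ _ h
    · exact h
    · exact h
    · exact ⟨h.1.symm, H.symm.symm _ _ h.2⟩⟩
  loopless := ⟨by
    rintro (s | ⟨i, w⟩) h
    · exact F.loopless.irrefl s h
    · exact H.loopless.irrefl _ h.2⟩

/-!
List the vertices of `G` as those of `F` followed by the `k` copies of `H₁ = H − v`. Since `v`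
is adjacent to all of `H₁`, `xI − A(G)` is the block matrix
`[[xI − A(F), −Ψ], [−Ψᵀ, I_k ⊗ N]]` with `N = xI − A(H₁)` and `Ψ a (i, w) = [a = f i]`.
The lower right block has determinant `det N ^ k` and inverse `I_k ⊗ N⁻¹`, and each row of `Ψ`
sums the columns of `N⁻¹` within one copy, so `Ψ (I_k ⊗ N⁻¹) Ψᵀ = Γ(x) P` with
`Γ(x) = 1ᵀ N⁻¹ 1`. The Schur complement formula finishes the proof.
-/

open scoped Kronecker

namespace Matrix

variable {V ι S R : Type*}

theorem submatrix_fst_mul_one_kronecker_apply [Fintype ι] [Fintype S] [NonAssocSemiring R]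
    [DecidableEq ι] (E : Matrix V ι R) (M : Matrix S S R) (a : V) (p : ι × S) :
    (E.submatrix id (Prod.fst : ι × S → ι) * ((1 : Matrix ι ι R) ⊗ₖ M)) a p
      = E a p.1 * ∑ w, M w p.2 := by
  rw [mul_apply]
  simp [Fintype.sum_prod_type, one_apply, Finset.mul_sum]

theorem submatrix_fst_mul_one_kronecker_mul_submatrix_fst [Fintype ι] [Fintype S]
    [CommSemiring R] [DecidableEq ι] (E : Matrix V ι R) (M : Matrix S S R) (E' : Matrix ι V R) :
    E.submatrix id (Prod.fst : ι × S → ι) * ((1 : Matrix ι ι R) ⊗ₖ M)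
        * E'.submatrix (Prod.fst : ι × S → ι) id
      = (∑ i, ∑ j, M i j) • (E * E') := by
  ext a b
  rw [mul_apply, Fintype.sum_prod_type, smul_apply, mul_apply, smul_eq_mul, Finset.mul_sum]
  refine Finset.sum_congr rfl fun i _ => ?_
  simp only [submatrix_fst_mul_one_kronecker_apply, submatrix_apply, id, ← Finset.sum_mul,
    ← Finset.mul_sum]
  rw [Finset.sum_comm]
  ring

theorem det_fromBlocks_one_kronecker [Fintype V] [Fintype ι] [Fintype S] [Field R]
    [DecidableEq V] [DecidableEq ι] [DecidableEq S]
    (A : Matrix V V R) (E : Matrix V ι R) (E' : Matrix ι V R) (N : Matrix S S R)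
    (hN : IsUnit N.det) :
    (fromBlocks A (E.submatrix id (Prod.fst : ι × S → ι)) (E'.submatrix Prod.fst id)
        ((1 : Matrix ι ι R) ⊗ₖ N)).det
      = N.det ^ Fintype.card ι * (A - (∑ i, ∑ j, N⁻¹ i j) • (E * E')).det := by
  have hdet : ((1 : Matrix ι ι R) ⊗ₖ N).det = N.det ^ Fintype.card ι := by
    simp [det_kronecker]
  let := invertibleOfIsUnitDet _ (hdet ▸ hN.pow _)
  rw [det_fromBlocks₂₂, hdet, invOf_eq_nonsing_inv, inv_kronecker, inv_one,
    submatrix_fst_mul_one_kronecker_mul_submatrix_fst]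

theorem smul_one_sub_fromBlocks {m n : Type*} [DecidableEq m] [DecidableEq n] [Ring R]
    (x : R) (A : Matrix m m R) (B : Matrix m n R) (C : Matrix n m R) (D : Matrix n n R) :
    x • 1 - fromBlocks A B C D = fromBlocks (x • 1 - A) (-B) (-C) (x • 1 - D) := by
  rw [← fromBlocks_one, fromBlocks_smul, sub_eq_add_neg, fromBlocks_neg, fromBlocks_add]
  simp [sub_eq_add_neg]

theorem smul_one_sub_one_kronecker [DecidableEq ι] [DecidableEq S] [Ring R]
    (x : R) (M : Matrix S S R) :
    x • 1 - (1 : Matrix ι ι R) ⊗ₖ M = (1 : Matrix ι ι R) ⊗ₖ (x • 1 - M) := by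
  ext ⟨i, w⟩ ⟨j, w'⟩
  rcases eq_or_ne i j with rfl | hij
  · simp [one_apply, sub_eq_add_neg]
  · simp [one_apply, hij]

theorem embedMatrix_eq_mul_mul [Fintype ι] [DecidableEq V] [NonAssocSemiring R]
    (g : ι → V) (M : Matrix ι ι R) :
    embedMatrix g M
      = (1 : Matrix V V R).submatrix id g * M * (1 : Matrix V V R).submatrix g id := by
  ext a b
  simp only [embedMatrix, of_apply, mul_apply, submatrix_apply, id, one_apply, ite_mul,
    one_mul, zero_mul, mul_ite, mul_one, mul_zero]
  rw [Finset.sum_comm]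
  refine Finset.sum_congr rfl fun i _ => ?_
  rcases eq_or_ne (g i) b with rfl | hib
  · simp
  · simp [hib, hib.symm]

theorem embedMatrix_one [Fintype ι] [DecidableEq ι] [DecidableEq V] [NonAssocSemiring R]
    (g : ι → V) :
    embedMatrix g (1 : Matrix ι ι R)
      = (1 : Matrix V V R).submatrix id g * (1 : Matrix V V R).submatrix g id := by
  rw [embedMatrix_eq_mul_mul, Matrix.mul_one]

end Matrix

theorem adjMat_pocketGraph {V W R : Type*} [Fintype V] [DecidableEq V] [Fintype W]
    [DecidableEq W] [NonAssocSemiring R] (F : SimpleGraph V) (H : SimpleGraph W) (v : W)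
    (hdeg : ∀ w : W, w ≠ v → H.Adj v w) {k : ℕ} (f : Fin k ↪ V) :
    adjMat R (pocketGraph F H v f)
      = fromBlocks (adjMat R F)
          (((1 : Matrix V V R).submatrix id f).submatrix id
            (Prod.fst : Fin k × {w // w ≠ v} → Fin k))
          (((1 : Matrix V V R).submatrix f id).submatrix Prod.fst id)
          ((1 : Matrix (Fin k) (Fin k) R) ⊗ₖ adjMat R (delVert H v)) := by
  ext (a | ⟨i, w⟩) (b | ⟨j, w'⟩)
  · rfl
  · simp [adjMat, pocketGraph, one_apply, hdeg _ w'.2]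
  · simp [adjMat, pocketGraph, one_apply, hdeg _ w.2, eq_comm]
  · rcases eq_or_ne i j with rfl | hij
    · simp [adjMat, pocketGraph, delVert]
    · simp [adjMat, pocketGraph, one_apply, hij]

theorem adj_charpoly_pocketGraph_general
    {V W : Type*} [Fintype V] [DecidableEq V] [Fintype W] [DecidableEq W]
    (k : ℕ)
    (F : SimpleGraph V) (H : SimpleGraph W) (v : W)
    (hdeg : ∀ w : W, w ≠ v → H.Adj v w)
    (f : Fin k ↪ V)
    (x : ℂ)
    (hx : (x • (1 : Matrix {w : W // w ≠ v} {w : W // w ≠ v} ℂ)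
            - adjMat ℂ (delVert H v)).det ≠ 0) :
    (x • (1 : Matrix (V ⊕ (Fin k × {w : W // w ≠ v})) (V ⊕ (Fin k × {w : W // w ≠ v})) ℂ)
        - adjMat ℂ (pocketGraph F H v f)).det
      = ((x • (1 : Matrix {w : W // w ≠ v} {w : W // w ≠ v} ℂ)
            - adjMat ℂ (delVert H v)).det) ^ k
        * (x • (1 : Matrix V V ℂ)
            - (adjMat ℂ F
                + coronal (adjMat ℂ (delVert H v)) x
                    • embedMatrix (f : Fin k → V) (1 : Matrix (Fin k) (Fin k) ℂ))).det := by
  have hblocks : x • (1 : Matrix (V ⊕ (Fin k × {w : W // w ≠ v})) _ ℂ)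
        - adjMat ℂ (pocketGraph F H v f)
      = fromBlocks (x • 1 - adjMat ℂ F)
          ((-(1 : Matrix V V ℂ).submatrix id f).submatrix id Prod.fst)
          ((-(1 : Matrix V V ℂ).submatrix f id).submatrix Prod.fst id)
          ((1 : Matrix (Fin k) (Fin k) ℂ) ⊗ₖ (x • 1 - adjMat ℂ (delVert H v))) := by
    rw [adjMat_pocketGraph F H v hdeg f, smul_one_sub_fromBlocks, smul_one_sub_one_kronecker]
    rfl
  rw [hblocks, det_fromBlocks_one_kronecker _ _ _ _ hx.isUnit, Fintype.card_fin,
    Matrix.neg_mul, Matrix.mul_neg, neg_neg, ← embedMatrix_one, sub_sub, coronal]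

/-- Proposition 3.1. For `G = G[F, V_k, H_v]` and any complex `x` that is not
an eigenvalue of `A(H₁)` (`H₁ = H_v − v`),
`f_{A(G)}(x) = f_{A(H₁)}(x)^k ⬝ det(x Iₙ − (A(F) + Γ_{A(H₁)}(x) · diag(I_k, 0)))`. -/
theorem adj_charpoly_pocketGraph
    {V W : Type*} [Fintype V] [DecidableEq V] [Fintype W] [DecidableEq W]
    (n m k : ℕ) (hn : Fintype.card V = n) (hm : Fintype.card W = m) (hm2 : 2 ≤ m)
    (F : SimpleGraph V) (H : SimpleGraph W) (v : W)
    (hdeg : ∀ w : W, w ≠ v → H.Adj v w)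
    (f : Fin k ↪ V)
    (x : ℂ)
    (hx : (x • (1 : Matrix {w : W // w ≠ v} {w : W // w ≠ v} ℂ)
            - adjMat ℂ (delVert H v)).det ≠ 0) :
    (x • (1 : Matrix (V ⊕ (Fin k × {w : W // w ≠ v})) (V ⊕ (Fin k × {w : W // w ≠ v})) ℂ)
        - adjMat ℂ (pocketGraph F H v f)).det
      = ((x • (1 : Matrix {w : W // w ≠ v} {w : W // w ≠ v} ℂ)
            - adjMat ℂ (delVert H v)).det) ^ k
        * (x • (1 : Matrix V V ℂ)
            - (adjMat ℂ F
                + coronal (adjMat ℂ (delVert H v)) x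
                    • embedMatrix (f : Fin k → V) (1 : Matrix (Fin k) (Fin k) ℂ))).det :=
  adj_charpoly_pocketGraph_general k F H v hdeg f x hx
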